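/- Let K be an n×n real symmetric matrix written in block form K = [[z, yᵀ], [y, K̃]], where z ∈ ℝ, y ∈ ℝ^{n−1}, and K̃ is the bottom-right (n−1)×(n−1) principal minor. Let λ̂ be an eigenvalue of K with unit eigenvector û, let λ̃_1, …, λ̃_{n−1} be the eigenvalues of K̃ with corresponding orthonormal eigenvectors ũ_1, …, ũ_{n−1}, and assume λ̂ is not an eigenvalue of K̃ (i.e. λ̃_j ≠ λ̂ for all j). Then the first coordinate of û satisfies û(1)² = 1 / ( 1 + Σ_{j=1}^{n−1} (λ̃_j − λ̂)^{−2} (ũ_jᵀ y)² ). -/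
import Mathlib


/-- **Eigenvector coordinate identity via the principal minor.**
Let `K` be an `(m+1) × (m+1)` real symmetric matrix written in block form
`K = [[z, yᵀ], [y, K̃]]` (so `K̃ = K.submatrix Fin.succ Fin.succ` and
`y j = K (j+1) 0`). Let `λ̂` be an eigenvalue of `K` with unit eigenvector `û`,
let `λ̃_1, …, λ̃_m` be the eigenvalues of `K̃` with corresponding orthonormal
eigenvectors `ũ_1, …, ũ_m`, and assume `λ̃_j ≠ λ̂` for all `j`. Then
`û(1)² = 1 / (1 + Σ_j (λ̃_j - λ̂)^{-2} (ũ_jᵀ y)²)`. -/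
theorem eigenvector_first_coord_sq {m : ℕ}
    (K : Matrix (Fin (m + 1)) (Fin (m + 1)) ℝ) (hK : K.IsSymm)
    (lamHat : ℝ) (uHat : Fin (m + 1) → ℝ)
    (heig : K.mulVec uHat = lamHat • uHat)
    (hunit : ∑ i, uHat i ^ 2 = 1)
    (lamTil : Fin m → ℝ) (uTil : Fin m → Fin m → ℝ)
    (horth : ∀ j l : Fin m, (∑ i, uTil j i * uTil l i) = if j = l then (1 : ℝ) else 0)
    (heigTil : ∀ j, (K.submatrix Fin.succ Fin.succ).mulVec (uTil j) = lamTil j • uTil j)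
    (hne : ∀ j, lamTil j ≠ lamHat) :
    uHat 0 ^ 2 =
      1 / (1 + ∑ j, ((lamTil j - lamHat) ^ 2)⁻¹ * (∑ i, uTil j i * K i.succ 0) ^ 2) := by
  set Kt : Matrix (Fin m) (Fin m) ℝ := K.submatrix Fin.succ Fin.succ with hKt
  set y : Fin m → ℝ := fun i => K i.succ 0 with hy
  set w : Fin m → ℝ := fun i => uHat i.succ with hw
  set U : Matrix (Fin m) (Fin m) ℝ := Matrix.of uTil with hU
  have hUUt : U * U.transpose = 1 := by
    ext j l
    simpa [Matrix.mul_apply, Matrix.one_apply, hU] using horth j l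
  have hUtU : U.transpose * U = 1 := mul_eq_one_comm.mp hUUt
  have hKtsymm : Kt.IsSymm := hK.submatrix _
  set c : Fin m → ℝ := fun j => ∑ i, uTil j i * w i with hc
  set b : Fin m → ℝ := fun j => ∑ i, uTil j i * y i with hb
  -- row equation for rows 1..m
  have hrow : ∀ i : Fin m, Kt.mulVec w i + uHat 0 * y i = lamHat * w i := by
    intro i
    have h := congrFun heig i.succ
    simp only [Matrix.mulVec, dotProduct, Pi.smul_apply, smul_eq_mul,
      Fin.sum_univ_succ] at h
    simp only [Matrix.mulVec, dotProduct, hKt, Matrix.submatrix_apply, hy, hw]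
    linarith [h]
  have hcj : ∀ j, (lamTil j - lamHat) * c j = -(uHat 0) * b j := by
    intro j
    have h1 : ∑ i, uTil j i * (Kt.mulVec w i) = lamTil j * c j := by
      calc ∑ i, uTil j i * (Kt.mulVec w i)
          = ∑ i, ∑ k, uTil j i * (Kt i k * w k) := by
            simp [Matrix.mulVec, dotProduct, Finset.mul_sum]
        _ = ∑ k, (∑ i, Kt k i * uTil j i) * w k := by
            rw [Finset.sum_comm]
            refine Finset.sum_congr rfl fun k _ => ?_
            rw [Finset.sum_mul]
            refine Finset.sum_congr rfl fun i _ => ?_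
            rw [hKtsymm.apply k i]
            ring
        _ = ∑ k, (lamTil j * uTil j k) * w k := by
            refine Finset.sum_congr rfl fun k _ => ?_
            have := congrFun (heigTil j) k
            simp only [Matrix.mulVec, dotProduct, Pi.smul_apply, smul_eq_mul] at this
            rw [this]
        _ = lamTil j * c j := by
            rw [hc, Finset.mul_sum]
            exact Finset.sum_congr rfl fun k _ => by ring
    have h2 : ∑ i, uTil j i * (Kt.mulVec w i)
        = lamHat * c j - uHat 0 * b j := by
      have : ∀ i, uTil j i * (Kt.mulVec w i)
          = uTil j i * (lamHat * w i) - uTil j i * (uHat 0 * y i) := by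
        intro i
        linear_combination uTil j i * hrow i
      rw [Finset.sum_congr rfl fun i _ => this i, Finset.sum_sub_distrib]
      rw [hc, hb, Finset.mul_sum, Finset.mul_sum]
      congr 1 <;> exact Finset.sum_congr rfl fun i _ => by ring
    rw [h1] at h2
    linarith [h2]
  -- Parseval
  have hcU : c = U.mulVec w := by
    funext j
    simp [Matrix.mulVec, dotProduct, hc, hU]
  have hpar : ∑ j, c j ^ 2 = ∑ i, w i ^ 2 := by
    have hrec : U.transpose.mulVec (U.mulVec w) = w := by
      rw [Matrix.mulVec_mulVec, hUtU, Matrix.one_mulVec]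
    calc ∑ j, c j ^ 2 = dotProduct c (U.mulVec w) := by
          rw [← hcU]
          simp [dotProduct, sq]
      _ = dotProduct (U.vecMul c) w := Matrix.dotProduct_mulVec _ _ _
      _ = dotProduct (U.transpose.mulVec c) w := by rw [Matrix.mulVec_transpose]
      _ = dotProduct w w := by rw [hcU, hrec]
      _ = ∑ i, w i ^ 2 := by simp [dotProduct, sq]
  have hc2 : ∀ j, c j ^ 2 = uHat 0 ^ 2 * (((lamTil j - lamHat) ^ 2)⁻¹ * b j ^ 2) := by
    intro j
    have hd : lamTil j - lamHat ≠ 0 := sub_ne_zero.mpr (hne j)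
    have h := hcj j
    field_simp
    linear_combination ((lamTil j - lamHat) * c j + (-uHat 0 * b j)) * h
  have hsum1 : (1 : ℝ) = uHat 0 ^ 2 + ∑ j, c j ^ 2 := by
    rw [hpar, ← hunit, Fin.sum_univ_succ]
  set S : ℝ := ∑ j, ((lamTil j - lamHat) ^ 2)⁻¹ * b j ^ 2 with hS
  have hkey : (1 : ℝ) = uHat 0 ^ 2 * (1 + S) := by
    have h1 : ∑ j, c j ^ 2 = uHat 0 ^ 2 * S := by
      rw [hS, Finset.mul_sum]
      exact Finset.sum_congr rfl fun j _ => hc2 j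
    have h2 : uHat 0 ^ 2 * (1 + S) = uHat 0 ^ 2 + uHat 0 ^ 2 * S := by ring
    linarith [hsum1, h1, h2]
  have hSnn : 0 ≤ S := by
    apply Finset.sum_nonneg
    intro j _
    positivity
  have hpos : (0 : ℝ) < 1 + S := by linarith
  have : uHat 0 ^ 2 = 1 / (1 + S) := by
    field_simp
    linarith [hkey]
  simpa [hS, hb, hy] using this
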